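/- arXiv:1603.02478 — 4 statements merged into one kernel-verified Lean document; each statement's English description precedes it below -/
import Mathlib

section
/- Arrow's impossibility theorem: for a finite set of voters (at least 2) and a finite set of at least 3 alternatives, there is no social welfare function mapping profiles of strict linear orders to a strict linear order that satisfies unanimity and independence of irrelevant alternatives and is non-dictatorial. -/
/-!
Call a coalition `U` of voters decisive for `(a, b)` if society ranks `a` above `b` whenever
everyone in `U` does. By unanimity and independence of irrelevant alternatives, a coalition that
wins `(a, b)` even against the opposition of all other voters is decisive for every pair
(field expansion: with a third alternative and transitivity of the social order one moves either
end of the pair). If `U ∪ W` is decisive with `U`, `W` disjoint, then a Condorcet-cycle profile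
shows that `U` or `W` alone is decisive (group contraction). Starting from the whole electorate,
which is decisive by unanimity, and removing voters one at a time yields a decisive single
voter, that is, a dictator.
-/

open Function

namespace Arrow

variable {V A : Type*}

open Classical in
/-- `x` first, `y` second, the remaining alternatives in the order of an arbitrary
well-ordering. -/
noncomputable def topTwo (x y : A) : A → A → Prop :=
  Prod.Lex (· < ·) WellOrderingRel on
    fun p => ((if p = x then 0 else if p = y then 1 else 2 : ℕ), p)

instance (x y : A) : IsStrictTotalOrder A (topTwo x y) :=
  Injective.isStrictTotalOrder_onFun (Prod.Lex (· < ·) WellOrderingRel) fun _ _ h =>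
    congrArg Prod.snd h

theorem topTwo_first {x y z : A} (hz : z ≠ x) : topTwo x y x z :=
  Prod.Lex.left _ _ (by simp [hz]; split_ifs <;> decide)

theorem topTwo_second {x y z : A} (hzx : z ≠ x) (hzy : z ≠ y) : topTwo x y y z :=
  Prod.Lex.left _ _ (by simp [hzx, hzy]; split_ifs <;> decide)

theorem nontrivial_of_three_le_card (hA : 3 ≤ ENat.card A) : Nontrivial A :=
  (ENat.one_lt_card_iff_nontrivial A).1 (lt_of_lt_of_le (by norm_num) hA)

def IsProfile (π : V → A → A → Prop) : Prop := ∀ v, IsStrictTotalOrder A (π v)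

structure IsArrowSWF (F : (V → A → A → Prop) → A → A → Prop) : Prop where
  isStrictTotalOrder : ∀ π, IsProfile π → IsStrictTotalOrder A (F π)
  unanimity : ∀ π, IsProfile π → ∀ a b, (∀ v, π v a b) → F π a b
  iia : ∀ π π', IsProfile π → IsProfile π' →
    ∀ a b, (∀ v, π v a b ↔ π' v a b) → (F π a b ↔ F π' a b)

variable {F : (V → A → A → Prop) → A → A → Prop} {U W : Set V} {x y z : A}

variable (F) in
def IsDecisiveFor (U : Set V) (a b : A) : Prop :=
  ∀ π, IsProfile π → (∀ v ∈ U, π v a b) → F π a b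

variable (F) in
def IsAlmostDecisiveFor (U : Set V) (a b : A) : Prop :=
  ∀ π, IsProfile π → (∀ v ∈ U, π v a b) → (∀ v ∉ U, π v b a) → F π a b

variable (F) in
def IsDecisive (U : Set V) : Prop := ∀ a b : A, a ≠ b → IsDecisiveFor F U a b

theorem IsDecisiveFor.isAlmostDecisiveFor (h : IsDecisiveFor F U x y) :
    IsAlmostDecisiveFor F U x y :=
  fun π hπ hU _ => h π hπ hU

theorem IsArrowSWF.isDecisive_univ (hF : IsArrowSWF F) : IsDecisive F (Set.univ : Set V) :=
  fun a b _ π hπ hU => hF.unanimity π hπ a b fun v => hU v trivial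

theorem IsArrowSWF.not_isDecisive_empty [Nontrivial A] (hF : IsArrowSWF F) :
    ¬ IsDecisive F (∅ : Set V) := by
  intro h
  obtain ⟨a, b, hab⟩ := exists_pair_ne A
  have hπ : IsProfile fun _ : V => topTwo a b := fun _ => inferInstance
  have := hF.isStrictTotalOrder _ hπ
  exact asymm (h a b hab _ hπ nofun) (h b a hab.symm _ hπ nofun)

theorem IsAlmostDecisiveFor.expand_snd (hF : IsArrowSWF F) (h : IsAlmostDecisiveFor F U x y)
    (hxy : x ≠ y) (hxz : x ≠ z) (hyz : y ≠ z) : IsDecisiveFor F U x z := by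
  classical
  intro π hπ hU
  -- outside `U`, `y` is put on top and `π` is copied on `{x, z}`
  let π' : V → A → A → Prop := fun v =>
    if v ∈ U then topTwo x y else if π v x z then topTwo y x else topTwo y z
  have hπ' : IsProfile π' := fun v => by dsimp only [π']; split_ifs <;> infer_instance
  have hxy' : F π' x y := h π' hπ'
    (fun v hv => by simpa [π', hv] using topTwo_first hxy.symm)
    (fun v hv => by simp only [π', if_neg hv]; split_ifs <;> exact topTwo_first hxy)
  have hyz' : F π' y z := hF.unanimity π' hπ' y z fun v => by
    dsimp only [π']
    split_ifs
    · exact topTwo_second hxz.symm hyz.symm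
    · exact topTwo_first hyz.symm
    · exact topTwo_first hyz.symm
  have := hF.isStrictTotalOrder π' hπ'
  refine (hF.iia π π' hπ hπ' x z fun v => ?_).2 (trans_of _ hxy' hyz')
  dsimp only [π']
  split_ifs with hv hxz_v
  · exact iff_of_true (hU v hv) (topTwo_first hxz.symm)
  · exact iff_of_true hxz_v (topTwo_second hyz.symm hxz.symm)
  · exact iff_of_false hxz_v (asymm (topTwo_second hxy hxz))

theorem IsAlmostDecisiveFor.expand_fst (hF : IsArrowSWF F) (h : IsAlmostDecisiveFor F U x y)
    (hxy : x ≠ y) (hxz : x ≠ z) (hyz : y ≠ z) : IsDecisiveFor F U z y := by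
  classical
  intro π hπ hU
  -- outside `U`, `x` is put below `y` and `z`, and `π` is copied on `{z, y}`
  let π' : V → A → A → Prop := fun v =>
    if v ∈ U then topTwo z x else if π v z y then topTwo z y else topTwo y z
  have hπ' : IsProfile π' := fun v => by dsimp only [π']; split_ifs <;> infer_instance
  have hzx' : F π' z x := hF.unanimity π' hπ' z x fun v => by
    dsimp only [π']
    split_ifs
    · exact topTwo_first hxz
    · exact topTwo_first hxz
    · exact topTwo_second hxy hxz
  have hxy' : F π' x y := h π' hπ'
    (fun v hv => by simpa [π', hv] using topTwo_second hyz hxy.symm)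
    (fun v hv => by
      simp only [π', if_neg hv]
      split_ifs
      · exact topTwo_second hxz hxy
      · exact topTwo_first hxy)
  have := hF.isStrictTotalOrder π' hπ'
  refine (hF.iia π π' hπ hπ' z y fun v => ?_).2 (trans_of _ hzx' hxy')
  dsimp only [π']
  split_ifs with hv hzy_v
  · exact iff_of_true (hU v hv) (topTwo_first hyz)
  · exact iff_of_true hzy_v (topTwo_first hyz)
  · exact iff_of_false hzy_v (asymm (topTwo_first hyz.symm))

theorem IsAlmostDecisiveFor.isDecisiveFor_snd (hF : IsArrowSWF F) (hA : 3 ≤ ENat.card A)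
    (h : IsAlmostDecisiveFor F U x y) (hxy : x ≠ y) (hzx : z ≠ x) : IsDecisiveFor F U x z := by
  by_cases hzy : z = y
  · subst hzy
    obtain ⟨w, hwx, hwz⟩ := ENat.exists_ne_ne_of_three_le hA x z
    exact (h.expand_snd hF hxy hwx.symm hwz.symm).isAlmostDecisiveFor.expand_snd hF
      hwx.symm hxy hwz
  · exact h.expand_snd hF hxy hzx.symm (Ne.symm hzy)

theorem IsAlmostDecisiveFor.isDecisiveFor_fst (hF : IsArrowSWF F) (hA : 3 ≤ ENat.card A)
    (h : IsAlmostDecisiveFor F U x y) (hxy : x ≠ y) (hzy : z ≠ y) : IsDecisiveFor F U z y := by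
  by_cases hzx : z = x
  · subst hzx
    obtain ⟨w, hwz, hwy⟩ := ENat.exists_ne_ne_of_three_le hA z y
    exact (h.expand_fst hF hxy hwz.symm hwy.symm).isAlmostDecisiveFor.expand_fst hF
      hwy hwz hxy.symm
  · exact h.expand_fst hF hxy (Ne.symm hzx) (Ne.symm hzy)

theorem IsAlmostDecisiveFor.isDecisive (hF : IsArrowSWF F) (hA : 3 ≤ ENat.card A)
    (h : IsAlmostDecisiveFor F U x y) (hxy : x ≠ y) : IsDecisive F U := by
  intro p q hpq
  obtain ⟨c, hcx, hcp⟩ := ENat.exists_ne_ne_of_three_le hA x p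
  have hxc : IsDecisiveFor F U x c := h.isDecisiveFor_snd hF hA hxy hcx
  have hpc : IsDecisiveFor F U p c :=
    hxc.isAlmostDecisiveFor.isDecisiveFor_fst hF hA hcx.symm hcp.symm
  exact hpc.isAlmostDecisiveFor.isDecisiveFor_snd hF hA hcp.symm hpq.symm

theorem IsArrowSWF.isDecisive_or_isDecisive_of_union (hF : IsArrowSWF F)
    (hA : 3 ≤ ENat.card A) (hUW : Disjoint U W) (h : IsDecisive F (U ∪ W)) :
    IsDecisive F U ∨ IsDecisive F W := by
  classical
  have := nontrivial_of_three_le_card hA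
  obtain ⟨a, b, hab⟩ := exists_pair_ne A
  obtain ⟨c, hca, hcb⟩ := ENat.exists_ne_ne_of_three_le hA a b
  -- the Condorcet cycle: `U` ranks `a b c`, `W` ranks `b c a`, the others `c a b`
  let σ : V → A → A → Prop := fun v =>
    if v ∈ U then topTwo a b else if v ∈ W then topTwo b c else topTwo c a
  have hσ : IsProfile σ := fun v => by dsimp only [σ]; split_ifs <;> infer_instance
  have := hF.isStrictTotalOrder σ hσ
  have hbc : F σ b c := h b c hcb.symm σ hσ fun v hv => by
    dsimp only [σ]
    rcases hv with hvU | hvW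
    · simpa [hvU] using topTwo_second hca hcb
    · simpa [hvW, Set.disjoint_right.1 hUW hvW] using topTwo_first hcb
  by_cases hac : F σ a c
  · refine .inl (IsAlmostDecisiveFor.isDecisive hF hA (fun π hπ hU hnotU => ?_) hca.symm)
    refine (hF.iia π σ hπ hσ a c fun v => ?_).2 hac
    have := hπ v
    dsimp only [σ]
    split_ifs with hvU hvW
    · exact iff_of_true (hU v hvU) (topTwo_first hca)
    · exact iff_of_false (asymm (hnotU v hvU)) (asymm (topTwo_second hab hca.symm))
    · exact iff_of_false (asymm (hnotU v hvU)) (asymm (topTwo_first hca.symm))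
  · have hca' : F σ c a := ((trichotomous_of _ a c).resolve_left hac).resolve_left hca.symm
    refine .inr (IsAlmostDecisiveFor.isDecisive hF hA (fun π hπ hW hnotW => ?_) hab.symm)
    refine (hF.iia π σ hπ hσ b a fun v => ?_).2 (trans_of _ hbc hca')
    have := hπ v
    dsimp only [σ]
    by_cases hvW : v ∈ W
    · simpa [hvW, Set.disjoint_right.1 hUW hvW] using iff_of_true (hW v hvW) (topTwo_first hab)
    · refine iff_of_false (asymm (hnotW v hvW)) ?_
      split_ifs
      · exact asymm (topTwo_first hab.symm)
      · exact asymm (topTwo_second hcb.symm hab.symm)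

theorem IsArrowSWF.exists_isDecisive_singleton (hF : IsArrowSWF F) (hA : 3 ≤ ENat.card A)
    (hU : U.Finite) (h : IsDecisive F U) : ∃ d ∈ U, IsDecisive F {d} := by
  have := nontrivial_of_three_le_card hA
  induction U, hU using Set.Finite.induction_on with
  | empty => exact absurd h hF.not_isDecisive_empty
  | @insert a s ha _ ih =>
    rw [Set.insert_eq] at h
    rcases hF.isDecisive_or_isDecisive_of_union hA (Set.disjoint_singleton_left.2 ha) h with
      h | h
    · exact ⟨a, Set.mem_insert a s, h⟩
    · obtain ⟨d, hd, hd'⟩ := ih h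
      exact ⟨d, Set.mem_insert_of_mem a hd, hd'⟩

end Arrow

theorem arrow_impossibility_general
    (V A : Type) [Fintype V] [Fintype A]
    (hA : 3 ≤ Fintype.card A)
    (F : (V → A → A → Prop) → (A → A → Prop))
    (hF : ∀ π : V → A → A → Prop, (∀ v, IsStrictTotalOrder A (π v)) →
      IsStrictTotalOrder A (F π))
    (unanimity : ∀ π : V → A → A → Prop, (∀ v, IsStrictTotalOrder A (π v)) →
      ∀ a b : A, (∀ v, π v a b) → F π a b)
    (iia : ∀ π π' : V → A → A → Prop,
      (∀ v, IsStrictTotalOrder A (π v)) → (∀ v, IsStrictTotalOrder A (π' v)) →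
      ∀ a b : A, (∀ v, π v a b ↔ π' v a b) → (F π a b ↔ F π' a b)) :
    ∃ d : V, ∀ π : V → A → A → Prop, (∀ v, IsStrictTotalOrder A (π v)) →
      ∀ a b : A, π d a b → F π a b := by
  have hSWF : Arrow.IsArrowSWF F := ⟨hF, unanimity, iia⟩
  have hA' : 3 ≤ ENat.card A := by simpa [ENat.card_eq_coe_fintype_card] using hA
  obtain ⟨d, -, hd⟩ :=
    hSWF.exists_isDecisive_singleton hA' Set.finite_univ hSWF.isDecisive_univ
  refine ⟨d, fun π hπ a b hab => ?_⟩
  have := hπ d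
  exact hd a b (ne_of_irrefl hab) π hπ fun v hv => hv ▸ hab

/-- Arrow's impossibility theorem: for a finite set `V` of at least 2 voters and a
finite set `A` of at least 3 alternatives, every social welfare function mapping each
profile of strict linear orders to a strict linear order that satisfies unanimity and
independence of irrelevant alternatives is dictatorial; i.e. there is no such function
that is non-dictatorial. -/
theorem arrow_impossibility
    (V A : Type) [Fintype V] [Fintype A]
    (hV : 2 ≤ Fintype.card V) (hA : 3 ≤ Fintype.card A)
    (F : (V → A → A → Prop) → (A → A → Prop))
    (hF : ∀ π : V → A → A → Prop, (∀ v, IsStrictTotalOrder A (π v)) →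
      IsStrictTotalOrder A (F π))
    (unanimity : ∀ π : V → A → A → Prop, (∀ v, IsStrictTotalOrder A (π v)) →
      ∀ a b : A, (∀ v, π v a b) → F π a b)
    (iia : ∀ π π' : V → A → A → Prop,
      (∀ v, IsStrictTotalOrder A (π v)) → (∀ v, IsStrictTotalOrder A (π' v)) →
      ∀ a b : A, (∀ v, π v a b ↔ π' v a b) → (F π a b ↔ F π' a b)) :
    ∃ d : V, ∀ π : V → A → A → Prop, (∀ v, IsStrictTotalOrder A (π v)) →
      ∀ a b : A, π d a b → F π a b :=
  arrow_impossibility_general V A hA F hF unanimity iia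
end

section
/- For 2 voters and 3 alternatives, there are exactly 2 social welfare functions satisfying both unanimity and independence of irrelevant alternatives, and both are dictatorial (the two projection functions). -/
/-- A strict linear order on the 3-element set `Fin 3`, encoded as a boolean-valued
relation (`r a b = true` meaning `a` is ranked above `b`). -/
abbrev LO3 := {r : Fin 3 → Fin 3 → Bool // IsStrictTotalOrder (Fin 3) (fun a b => r a b = true)}

lemma LO3.mk_sto (r : Fin 3 → Fin 3 → Bool)
    (h₁ : ∀ a b, r a b = true ∨ a = b ∨ r b a = true)
    (h₂ : ∀ a, ¬ r a a = true)
    (h₃ : ∀ a b c, r a b = true → r b c = true → r a c = true) :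
    IsStrictTotalOrder (Fin 3) (fun a b => r a b = true) := by
  haveI : IsTrichotomous (Fin 3) (fun a b => r a b = true) :=
    ⟨fun a b hab hba => (h₁ a b).elim (fun h => absurd h hab) (fun h => h.elim id (fun h => absurd h hba))⟩
  haveI : IsIrrefl (Fin 3) (fun a b => r a b = true) := ⟨h₂⟩
  haveI : IsTrans (Fin 3) (fun a b => r a b = true) := ⟨h₃⟩
  haveI : IsStrictOrder (Fin 3) (fun a b => r a b = true) := ⟨⟩
  exact ⟨⟩

/-- The reverse (inverse) of a strict linear order. -/
def LO3.rev (r : LO3) : LO3 :=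
  ⟨fun a b => r.val b a, by
    haveI := r.prop
    exact @IsStrictTotalOrder.swap (Fin 3) (fun a b => r.val a b = true) _⟩

/-- Kendall tau distance: the number of (unordered) pairs on which two orders disagree. -/
def kendall (r s : LO3) : ℕ :=
  (Finset.univ.filter
    (fun p : Fin 3 × Fin 3 => p.1 < p.2 ∧ r.val p.1 p.2 ≠ s.val p.1 p.2)).card

/-- Independence of irrelevant alternatives for a two-voter SWF on `Fin 3`. -/
def IIA2 (W : (Fin 2 → LO3) → LO3) : Prop :=
  ∀ π π' : Fin 2 → LO3, ∀ a b : Fin 3,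
    (∀ v, (π v).val a b = (π' v).val a b) → (W π).val a b = (W π').val a b

/-- Unanimity for a two-voter SWF on `Fin 3`. -/
def Unanimity2 (W : (Fin 2 → LO3) → LO3) : Prop :=
  ∀ π : Fin 2 → LO3, ∀ a b : Fin 3, (∀ v, (π v).val a b = true) → (W π).val a b = true

def Dictatorial (W : (Fin 2 → LO3) → LO3) : Prop := ∃ d, ∀ π, W π = π d

def InverselyDictatorial (W : (Fin 2 → LO3) → LO3) : Prop := ∃ d, ∀ π, W π = (π d).rev

/-
With two voters, independence of irrelevant alternatives makes the social ranking of each pair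
`(a, b)` depend only on the two individual rankings of that pair, and unanimity fixes it when they
agree. In a profile where the voters disagree on a pair, one of them prevails, and IIA makes that
voter decisive on the pair. Transitivity of the social order spreads decisiveness from `(a, b)` to
`(a, d)` and `(d, b)`, hence to every pair of distinct alternatives, and a voter decisive on every
pair is a dictator.
-/

namespace LO3

variable (r s : LO3)

theorem val_self (a : Fin 3) : r.val a a = false := by
  have := r.prop
  simpa using irrefl_of (fun a b => r.val a b = true) a

theorem val_trans {a b c : Fin 3} (hab : r.val a b = true) (hbc : r.val b c = true) :
    r.val a c = true := by
  have := r.prop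
  exact trans_of (fun a b => r.val a b = true) hab hbc

theorem val_swap_eq_false {a b : Fin 3} (h : r.val a b = true) : r.val b a = false := by
  have := r.prop
  simpa using asymm_of (fun a b => r.val a b = true) h

theorem val_swap_eq_true {a b : Fin 3} (hab : a ≠ b) (h : r.val a b = false) :
    r.val b a = true := by
  have := r.prop
  simpa [h, hab] using trichotomous_of (fun a b => r.val a b = true) a b

theorem eq_of_le (h : ∀ a b, r.val a b = true → s.val a b = true) : r = s := by
  refine Subtype.ext (funext₂ fun a b => ?_)
  cases hr : r.val a b
  · by_cases hab : a = b
    · rw [hab, s.val_self]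
    · exact (s.val_swap_eq_false (h b a (r.val_swap_eq_true hab hr))).symm
  · exact (h a b hr).symm

def ofRank (f : Fin 3 → ℕ) (hf : f.Injective) : LO3 :=
  ⟨fun a b => decide (f b < f a),
    LO3.mk_sto _
      (fun a b => by
        rcases lt_trichotomy (f a) (f b) with h | h | h
        · simp [h]
        · exact .inr (.inl (hf h))
        · simp [h])
      (fun a => by simp)
      (fun a b c hab hbc => by simp only [decide_eq_true_eq] at *; omega)⟩

def ranked (x y : Fin 3) (h : x ≠ y) : LO3 :=
  ofRank (fun w => if w = x then 2 else if w = y then 1 else 0) fun a b hab => by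
    simp only at hab
    split_ifs at hab <;> simp_all
    omega

theorem ranked_val (x y : Fin 3) (h : x ≠ y) (a b : Fin 3) :
    (ranked x y h).val a b =
      decide ((if b = x then 2 else if b = y then 1 else 0) <
        (if a = x then 2 else if a = y then 1 else 0)) :=
  rfl

end LO3

open LO3

theorem forall_fin_two_of_ne {P : Fin 2 → Prop} {i j : Fin 2} (hij : j ≠ i) (hi : P i)
    (hj : P j) (v : Fin 2) : P v := by
  obtain rfl | rfl : v = i ∨ v = j := by omega
  exacts [hi, hj]

theorem rel_of_ne_of_replace {α : Type*} {R : α → α → Prop}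
    (third : ∀ a b : α, ∃ c, c ≠ a ∧ c ≠ b)
    (replace_right : ∀ a b d, R a b → a ≠ b → a ≠ d → b ≠ d → R a d)
    (replace_left : ∀ a b d, R a b → a ≠ b → a ≠ d → b ≠ d → R d b)
    {a b : α} (hab : a ≠ b) (h : R a b) {x y : α} (hxy : x ≠ y) : R x y := by
  have row : ∀ {a b}, a ≠ b → R a b → ∀ y, y ≠ a → R a y := fun {a b} hab h y hya => by
    by_cases hyb : y = b
    · exact hyb ▸ h
    · exact replace_right a b y h hab (Ne.symm hya) (Ne.symm hyb)
  have col : ∀ {a b}, a ≠ b → R a b → ∀ x, x ≠ b → R x b := fun {a b} hab h x hxb => by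
    by_cases hxa : x = a
    · exact hxa ▸ h
    · exact replace_left a b x h hab (Ne.symm hxa) (Ne.symm hxb)
  by_cases hxb : x = b
  · subst hxb
    obtain ⟨c, hca, hcb⟩ := third a x
    have hxc : R x c := col (Ne.symm hca) (row hab h c hca) x (Ne.symm hcb)
    have hxa : R x a := row (Ne.symm hcb) hxc a hab
    exact row hab.symm hxa y (Ne.symm hxy)
  · exact row hxb (col hab h x hxb) y (Ne.symm hxy)

theorem unanimity2_proj (i : Fin 2) : Unanimity2 fun π => π i :=
  fun _ _ _ h => h i

theorem iia2_proj (i : Fin 2) : IIA2 fun π => π i :=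
  fun _ _ _ _ h => h i

def IsDecisive (W : (Fin 2 → LO3) → LO3) (i : Fin 2) (a b : Fin 3) : Prop :=
  ∀ π : Fin 2 → LO3, (π i).val a b = true → (W π).val a b = true

section Decisive

variable {W : (Fin 2 → LO3) → LO3} (hU : Unanimity2 W) (hE : IIA2 W)
include hU hE

theorem isDecisive_of_prevails {i j : Fin 2} (hij : j ≠ i) {a b : Fin 3} {π : Fin 2 → LO3}
    (hi : (π i).val a b = true) (hj : (π j).val a b = false) (hw : (W π).val a b = true) :
    IsDecisive W i a b := by
  intro π' hi'
  cases hj' : (π' j).val a b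
  · exact (hE π' π a b (forall_fin_two_of_ne hij (hi'.trans hi.symm) (hj'.trans hj.symm))).trans hw
  · exact hU π' a b (forall_fin_two_of_ne hij hi' hj')

theorem IsDecisive.replace_right {i : Fin 2} {a b d : Fin 3} (h : IsDecisive W i a b)
    (hab : a ≠ b) (had : a ≠ d) (hbd : b ≠ d) : IsDecisive W i a d := by
  obtain ⟨j, hij⟩ := exists_ne i
  -- Voter `i` ranks `a ≻ b ≻ d` and voter `j` ranks `b ≻ d ≻ a`: decisiveness gives `a ≻ b`,
  -- unanimity `b ≻ d`, so society ranks `a ≻ d` against voter `j`.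
  let π : Fin 2 → LO3 := fun v => if v = i then ranked a b hab else ranked b d hbd
  have hπi : π i = ranked a b hab := if_pos rfl
  have hπj : π j = ranked b d hbd := if_neg hij
  have hsab : (W π).val a b = true := h π (by simp [hπi, ranked_val, hab.symm])
  have hsbd : (W π).val b d = true := hU π b d <| forall_fin_two_of_ne hij
    (by simp [hπi, ranked_val, hab.symm, had.symm, hbd.symm])
    (by simp [hπj, ranked_val, hbd.symm])
  exact isDecisive_of_prevails hU hE hij
    (by simp [hπi, ranked_val, had.symm, hbd.symm])
    (by simp [hπj, ranked_val, hab, had, hbd.symm])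
    ((W π).val_trans hsab hsbd)

theorem IsDecisive.replace_left {i : Fin 2} {a b d : Fin 3} (h : IsDecisive W i a b)
    (hab : a ≠ b) (had : a ≠ d) (hbd : b ≠ d) : IsDecisive W i d b := by
  obtain ⟨j, hij⟩ := exists_ne i
  -- Voter `i` ranks `d ≻ a ≻ b` and voter `j` ranks `b ≻ d ≻ a`: unanimity gives `d ≻ a`,
  -- decisiveness `a ≻ b`, so society ranks `d ≻ b` against voter `j`.
  let π : Fin 2 → LO3 := fun v => if v = i then ranked d a had.symm else ranked b d hbd
  have hπi : π i = ranked d a had.symm := if_pos rfl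
  have hπj : π j = ranked b d hbd := if_neg hij
  have hsab : (W π).val a b = true := h π (by simp [hπi, ranked_val, had, hbd, hab.symm])
  have hsda : (W π).val d a = true := hU π d a <| forall_fin_two_of_ne hij
    (by simp [hπi, ranked_val, had])
    (by simp [hπj, ranked_val, hab, had, hbd.symm])
  exact isDecisive_of_prevails hU hE hij
    (by simp [hπi, ranked_val, hbd, hab.symm])
    (by simp [hπj, ranked_val, hbd.symm])
    ((W π).val_trans hsda hsab)

theorem IsDecisive.eq_proj {i : Fin 2} {a b : Fin 3} (h : IsDecisive W i a b) (hab : a ≠ b) :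
    W = fun π => π i := by
  have third : ∀ a b : Fin 3, ∃ c, c ≠ a ∧ c ≠ b := by decide
  have hall : ∀ x y, x ≠ y → IsDecisive W i x y := fun x y hxy =>
    rel_of_ne_of_replace third (fun _ _ _ => replace_right hU hE) (fun _ _ _ => replace_left hU hE)
      hab h hxy
  funext π
  refine ((π i).eq_of_le _ fun x y hxy => hall x y ?_ π hxy).symm
  rintro rfl
  simp [val_self] at hxy

theorem exists_isDecisive : ∃ i a b, a ≠ b ∧ IsDecisive W i a b := by
  have h01 : (0 : Fin 3) ≠ 1 := by decide
  let π : Fin 2 → LO3 := ![ranked 0 1 h01, ranked 1 0 h01.symm]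
  cases hw : (W π).val 0 1
  · exact ⟨1, 1, 0, h01.symm, isDecisive_of_prevails hU hE (by decide : (0 : Fin 2) ≠ 1)
      (by simp [π, ranked_val]) (by simp [π, ranked_val]) ((W π).val_swap_eq_true h01 hw)⟩
  · exact ⟨0, 0, 1, h01, isDecisive_of_prevails hU hE (by decide : (1 : Fin 2) ≠ 0)
      (by simp [π, ranked_val]) (by simp [π, ranked_val]) hw⟩

end Decisive

theorem unanimity2_and_iia2_iff {W : (Fin 2 → LO3) → LO3} :
    Unanimity2 W ∧ IIA2 W ↔ ∃ i, W = fun π => π i := by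
  constructor
  · rintro ⟨hU, hE⟩
    obtain ⟨i, a, b, hab, h⟩ := exists_isDecisive hU hE
    exact ⟨i, h.eq_proj hU hE hab⟩
  · rintro ⟨i, rfl⟩
    exact ⟨unanimity2_proj i, iia2_proj i⟩

theorem proj_zero_ne_proj_one : (fun π : Fin 2 → LO3 => π 0) ≠ fun π => π 1 := by
  have h01 : (0 : Fin 3) ≠ 1 := by decide
  intro h
  have := congrArg (fun W => (W ![ranked 0 1 h01, ranked 1 0 h01.symm]).val 0 1) h
  simp [ranked_val] at this

/-- For 2 voters and 3 alternatives, there are exactly 2 social welfare functions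
satisfying both unanimity and independence of irrelevant alternatives, and both are
dictatorial: they are the two projection functions. -/
theorem arrow_base_case_exactly_two_swf :
    {W : (Fin 2 → LO3) → LO3 | Unanimity2 W ∧ IIA2 W} =
      {fun π => π 0, fun π => π 1} ∧
    {W : (Fin 2 → LO3) → LO3 | Unanimity2 W ∧ IIA2 W}.ncard = 2 ∧
    (∀ W ∈ {W : (Fin 2 → LO3) → LO3 | Unanimity2 W ∧ IIA2 W}, Dictatorial W) := by
  have hset : {W : (Fin 2 → LO3) → LO3 | Unanimity2 W ∧ IIA2 W} =
      {fun π => π 0, fun π => π 1} := by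
    ext W
    simp [unanimity2_and_iia2_iff, Fin.exists_fin_two]
  refine ⟨hset, hset ▸ Set.ncard_pair proj_zero_ne_proj_one, ?_⟩
  intro W hW
  obtain ⟨i, rfl⟩ := unanimity2_and_iia2_iff.mp hW
  exact ⟨i, fun _ => rfl⟩
end

section
/- Bossert–Pattanaik–Xu inconsistency: for a linearly ordered set X with at least 4 elements, there is no binary relation ⊵ on the nonempty finite subsets of X that is transitive and satisfies simple dominance, independence, uncertainty aversion, and simple top monotonicity. -/
/-- Bossert–Pattanaik–Xu inconsistency: for a linearly ordered set `X` with at least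
4 elements, there is no binary relation `R` (weak preference `⊵`, with strict part
`SR`) on the nonempty finite subsets of `X` that is transitive and satisfies simple
dominance, independence, uncertainty aversion, and simple top monotonicity.
Here `x > y` plays the role of `x ≻ y`. -/
theorem bpx_inconsistency (X : Type) [LinearOrder X]
    (hX : ∃ s : Finset X, 4 ≤ s.card) :
    ¬ ∃ R : Finset X → Finset X → Prop,
      -- transitivity on nonempty finite subsets
      (∀ A B C : Finset X, A.Nonempty → B.Nonempty → C.Nonempty →
        R A B → R B C → R A C) ∧
      -- simple dominance
      (∀ x y : X, y < x →
        ((R {x} {x, y} ∧ ¬ R {x, y} {x}) ∧ (R {x, y} {y} ∧ ¬ R {y} {x, y}))) ∧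
      -- independence
      (∀ A B : Finset X, ∀ x : X, A.Nonempty → B.Nonempty → x ∉ A ∪ B →
        (R A B ∧ ¬ R B A) → R (insert x A) (insert x B)) ∧
      -- uncertainty aversion
      (∀ x y z : X, z < y → y < x → (R {y} {x, z} ∧ ¬ R {x, z} {y})) ∧
      -- simple top monotonicity
      (∀ x y z : X, y < x → z < x → z < y →
        (R {x, z} {y, z} ∧ ¬ R {y, z} {x, z})) := by
  rintro ⟨R, hTrans, hDom, hInd, hUA, hSTM⟩
  obtain ⟨s, hs⟩ := hX
  -- extract four elements a > b > c > d
  have h0 : s.Nonempty := Finset.card_pos.mp (by omega)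
  set a := s.max' h0 with ha
  have has : a ∈ s := s.max'_mem h0
  have h1 : (s.erase a).Nonempty := Finset.card_pos.mp (by
    rw [Finset.card_erase_of_mem has]; omega)
  set b := (s.erase a).max' h1 with hb
  have hbs : b ∈ s.erase a := (s.erase a).max'_mem h1
  have hba : b < a := lt_of_le_of_ne (s.le_max' b (Finset.mem_of_mem_erase hbs))
    (Finset.ne_of_mem_erase hbs)
  have h2 : ((s.erase a).erase b).Nonempty := Finset.card_pos.mp (by
    rw [Finset.card_erase_of_mem hbs, Finset.card_erase_of_mem has]; omega)
  set c := ((s.erase a).erase b).max' h2 with hc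
  have hcs : c ∈ (s.erase a).erase b := ((s.erase a).erase b).max'_mem h2
  have hcb : c < b := lt_of_le_of_ne ((s.erase a).le_max' c (Finset.mem_of_mem_erase hcs))
    (Finset.ne_of_mem_erase hcs)
  have h3 : (((s.erase a).erase b).erase c).Nonempty := Finset.card_pos.mp (by
    rw [Finset.card_erase_of_mem hcs, Finset.card_erase_of_mem hbs,
      Finset.card_erase_of_mem has]; omega)
  set d := (((s.erase a).erase b).erase c).max' h3 with hd
  have hds : d ∈ ((s.erase a).erase b).erase c := (((s.erase a).erase b).erase c).max'_mem h3
  have hdc : d < c := lt_of_le_of_ne (((s.erase a).erase b).le_max' d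
    (Finset.mem_of_mem_erase hds)) (Finset.ne_of_mem_erase hds)
  have hca : c < a := hcb.trans hba
  have hdb : d < b := hdc.trans hcb
  have hda : d < a := hdb.trans hba
  -- step 1: uncertainty aversion gives {b} ⊳ {a,c}
  have step1 : R {b} {a, c} ∧ ¬ R {a, c} {b} := hUA a b c hcb hba
  -- step 2: independence (insert d) gives R {b,d} {a,c,d}
  have hdnot : d ∉ ({b} : Finset X) ∪ {a, c} := by
    simp only [Finset.mem_union, Finset.mem_insert, Finset.mem_singleton]
    push_neg
    exact ⟨hdb.ne, hda.ne, hdc.ne⟩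
  have step2 : R (insert d {b}) (insert d {a, c}) :=
    hInd {b} {a, c} d (Finset.singleton_nonempty b) (Finset.insert_nonempty a {c}) hdnot step1
  have e1 : (insert d {b} : Finset X) = {b, d} := Finset.pair_comm d b
  have e2 : (insert d {a, c} : Finset X) = {a, c, d} := by
    ext x
    simp only [Finset.mem_insert, Finset.mem_singleton]
    tauto
  rw [e1, e2] at step2
  -- step 3: dominance gives {c,d} ⊳ {d}
  have step3 : R {c, d} {d} ∧ ¬ R {d} {c, d} := (hDom c d hdc).2
  -- step 4: independence (insert a) gives R {a,c,d} {a,d}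
  have hanot : a ∉ ({c, d} : Finset X) ∪ {d} := by
    simp only [Finset.mem_union, Finset.mem_insert, Finset.mem_singleton]
    push_neg
    exact ⟨⟨hca.ne', hda.ne'⟩, hda.ne'⟩
  have step4 : R (insert a {c, d}) (insert a {d}) :=
    hInd {c, d} {d} a (Finset.insert_nonempty c {d}) (Finset.singleton_nonempty d) hanot step3
  -- transitivity: R {b,d} {a,d}
  have step5 : R {b, d} {a, d} :=
    hTrans {b, d} {a, c, d} {a, d} (Finset.insert_nonempty b {d})
      (Finset.insert_nonempty a {c, d}) (Finset.insert_nonempty a {d}) step2 step4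
  -- simple top monotonicity: ¬ R {b,d} {a,d}
  exact (hSTM a b d hba hda hdb).2 step5
end

section
/- Euler's sum-of-powers conjecture is false for k = 5: 27^5 + 84^5 + 110^5 + 133^5 = 144^5, providing a counterexample with n = 4 < k = 5. -/
/-- Euler's sum-of-powers conjecture is false for `k = 5`: the Lander–Parkin identity
`27^5 + 84^5 + 110^5 + 133^5 = 144^5` is a counterexample with `n = 4 < k = 5`. -/
theorem euler_conjecture_false :
    (27:ℕ)^5 + 84^5 + 110^5 + 133^5 = 144^5 ∧
    ¬ (∀ (n k : ℕ), 1 < n → 1 < k → ∀ (a : Fin n → ℕ) (b : ℕ),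
        (∀ i, 0 < a i) → 0 < b → (∑ i, a i ^ k) = b ^ k → k ≤ n) := by
  constructor
  · norm_num
  · intro h
    have := h 4 5 (by norm_num) (by norm_num) ![27, 84, 110, 133] 144
      (by decide) (by norm_num) (by decide)
    omega
end
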